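/- Let g(w) = (1/2)·w²·e^{-w}·1{w>0} with derivative ġ(w) = (w − w²/2)e^{-w} on (0,∞), and let P_θ be the probability measure on ℝ×{−1,+1} with density f_θ(y,z) = g(y−θ)·1{z=+1} + g(θ−y)·1{z=−1} with respect to λ = 𝔪 ⊗ ν. For x = (y,z) define Δ_θ(x) = −ġ(y−θ)/g(y−θ) if y > θ, Δ_θ(x) = ġ(θ−y)/g(θ−y) if y < θ, and Δ_θ(x) = 0 if y = θ. Then: (a) Δ_θ is square integrable with ∫ Δ_θ² dP_θ = ∫_0^∞ ġ(w)²/g(w) dw = 1; and (b) the family {P_θ} is differentiable in quadratic mean at every θ with score Δ_θ: writing p_{t,θ}(x) = (f_{θ+t}(x)/f_θ(x))·1{f_θ(x) > 0} for the density of the P_θ-absolutely-continuous part of P_{θ+t}, one has ∫ ( √(p_{t,θ}(x)) − 1 − (t/2)·Δ_θ(x) )² dP_θ(x) = o(t²) as t → 0, and the P_θ-singular part of P_{θ+t} has mass o(t²). -/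

import Mathlib

open MeasureTheory Real Set Filter Asymptotics Topology
open scoped ENNReal

noncomputable def g (w : ℝ) : ℝ := if 0 < w then (1/2) * w^2 * Real.exp (-w) else 0

noncomputable def ν : Measure Bool :=
  (1/2 : ENNReal) • Measure.dirac true + (1/2 : ENNReal) • Measure.dirac false

instance : IsProbabilityMeasure ν := by
  constructor
  simp [ν]
  rw [ENNReal.inv_two_add_inv_two]

noncomputable def lam : Measure (ℝ × Bool) := (volume : Measure ℝ).prod ν

noncomputable def f (θ : ℝ) (x : ℝ × Bool) : ℝ :=
  if x.2 then g (x.1 - θ) else g (θ - x.1)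

noncomputable def P (θ : ℝ) : Measure (ℝ × Bool) :=
  lam.withDensity fun x => ENNReal.ofReal (f θ x)

noncomputable def gdot (w : ℝ) : ℝ := (w - w^2/2) * Real.exp (-w)

noncomputable def Δ (θ : ℝ) (x : ℝ × Bool) : ℝ :=
  if θ < x.1 then -gdot (x.1 - θ) / g (x.1 - θ)
  else if x.1 < θ then gdot (θ - x.1) / g (θ - x.1)
  else 0

noncomputable def p (t θ : ℝ) (x : ℝ × Bool) : ℝ :=
  if 0 < f θ x then f (θ + t) x / f θ x else 0

/-! Every integral against `P θ` splits into two integrals of `F(θ ± w) g(w)` over `w > 0`, and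
the Gamma integrals `∫₀^∞ wⁿ e^{-w} dw = n!` give the Fisher information `∫ ġ²/g = 1`.

Multiplying the DQM integrand by `g` turns it into the square of the remainder
`√g(w - t) - √g(w) + t ġ(w) / (2 √g(w))`. Where `w > t`, `√g(w) = w e^{-w/2} / √2` is smooth
and a second-order Taylor bound gives `O(t⁴)` times an integrable envelope; on the boundary layer
`0 < w ≤ t` the remainder is `O(t)` on an interval of length `t`. So the DQM integral is
`O(|t|³) = o(t²)`. The singular part of `P (θ + t)` lives on a strip of width `|t|` at the edge
of the support, where `g ≤ t²/2`, so its mass is `O(|t|³)` as well. -/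

lemma g_of_pos {w : ℝ} (hw : 0 < w) : g w = 1/2 * w^2 * Real.exp (-w) := if_pos hw

lemma g_of_nonpos {w : ℝ} (hw : w ≤ 0) : g w = 0 := if_neg hw.not_gt

lemma g_nonneg (w : ℝ) : 0 ≤ g w := by
  unfold g; split <;> positivity

lemma g_pos {w : ℝ} (hw : 0 < w) : 0 < g w := by
  rw [g_of_pos hw]; positivity

lemma g_eq_zero_iff {w : ℝ} : g w = 0 ↔ w ≤ 0 :=
  ⟨fun h => not_lt.1 fun hw => (g_pos hw).ne' h, g_of_nonpos⟩

lemma g_le_half_sq (w : ℝ) : g w ≤ w^2 / 2 := by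
  rcases le_or_gt w 0 with hw | hw
  · rw [g_of_nonpos hw]; positivity
  · rw [g_of_pos hw]
    have : Real.exp (-w) ≤ 1 := Real.exp_le_one_iff.2 (by linarith)
    nlinarith [sq_nonneg w]

@[fun_prop]
lemma measurable_g : Measurable g :=
  Measurable.ite measurableSet_Ioi (by fun_prop) measurable_const

@[fun_prop]
lemma measurable_f (θ : ℝ) : Measurable (f θ) :=
  Measurable.ite (measurable_snd (measurableSet_singleton true)) (by fun_prop) (by fun_prop)

@[fun_prop]
lemma measurable_Δ (θ : ℝ) : Measurable (Δ θ) := by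
  unfold Δ gdot
  refine Measurable.ite (measurableSet_lt measurable_const measurable_fst) (by fun_prop)
    (Measurable.ite (measurableSet_lt measurable_fst measurable_const) (by fun_prop)
      measurable_const)

@[fun_prop]
lemma measurable_p (t θ : ℝ) : Measurable (p t θ) :=
  Measurable.ite (measurableSet_lt measurable_const (measurable_f θ)) (by fun_prop)
    measurable_const

lemma lintegral_ν (H : Bool → ℝ≥0∞) : ∫⁻ z, H z ∂ν = H true / 2 + H false / 2 := by
  simp [ν, lintegral_add_measure, ENNReal.div_eq_inv_mul]

lemma lintegral_P (θ : ℝ) {F : ℝ × Bool → ℝ≥0∞} (hF : Measurable F) :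
    ∫⁻ x, F x ∂(P θ) =
      (∫⁻ w, F (θ + w, true) * ENNReal.ofReal (g w)) / 2
        + (∫⁻ w, F (θ - w, false) * ENNReal.ofReal (g w)) / 2 := by
  rw [P, lintegral_withDensity_eq_lintegral_mul lam (by fun_prop) hF, lam,
    lintegral_prod _ (by fun_prop)]
  simp only [Pi.mul_apply, lintegral_ν, f, if_true, Bool.false_eq_true, if_false]
  have h_true : ∫⁻ y, ENNReal.ofReal (g (y - θ)) * F (y, true)
      = ∫⁻ w, F (θ + w, true) * ENNReal.ofReal (g w) := by
    rw [← lintegral_sub_right_eq_self (fun w => F (θ + w, true) * ENNReal.ofReal (g w)) θ]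
    simp only [add_sub_cancel, mul_comm]
  have h_false : ∫⁻ y, ENNReal.ofReal (g (θ - y)) * F (y, false)
      = ∫⁻ w, F (θ - w, false) * ENNReal.ofReal (g w) := by
    rw [← lintegral_sub_left_eq_self (fun w => F (θ - w, false) * ENNReal.ofReal (g w)) θ]
    simp only [sub_sub_cancel, mul_comm]
  simp only [ENNReal.div_eq_inv_mul]
  rw [lintegral_add_left (by fun_prop), lintegral_const_mul' _ _ (by norm_num),
    lintegral_const_mul' _ _ (by norm_num), h_true, h_false]

lemma lintegral_mul_ofReal_g {F G : ℝ → ℝ≥0∞}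
    (h : ∀ w, 0 < w → F w * ENNReal.ofReal (g w) = G w) :
    ∫⁻ w, F w * ENNReal.ofReal (g w) = ∫⁻ w in Ioi 0, G w := by
  rw [← lintegral_indicator measurableSet_Ioi]
  congr 1 with w
  rcases le_or_gt w 0 with hw | hw
  · simp [g_of_nonpos hw, hw]
  · simp [h w hw, hw]

lemma integrableOn_pow_mul_exp_neg (n : ℕ) :
    IntegrableOn (fun w : ℝ => w^n * Real.exp (-w)) (Ioi 0) := by
  refine (Real.GammaIntegral_convergent (s := n + 1) (by positivity)).congr_fun
    (fun w _ => ?_) measurableSet_Ioi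
  simp only [add_sub_cancel_right, Real.rpow_natCast, mul_comm]

lemma integral_pow_mul_exp_neg (n : ℕ) :
    ∫ w in Ioi (0:ℝ), w^n * Real.exp (-w) = n.factorial := by
  rw [← Real.Gamma_nat_eq_factorial, ← Nat.cast_succ, Real.Gamma_eq_integral (by positivity)]
  refine setIntegral_congr_fun measurableSet_Ioi (fun w _ => ?_)
  simp only [Nat.cast_succ, add_sub_cancel_right, Real.rpow_natCast, mul_comm]

lemma quadratic_mul_exp_neg_eq (a b c w : ℝ) :
    (a + b*w + c*w^2) * Real.exp (-w) =
      a * (w^0 * Real.exp (-w)) + b * (w^1 * Real.exp (-w)) + c * (w^2 * Real.exp (-w)) := by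
  ring

lemma integrableOn_quadratic_mul_exp_neg (a b c : ℝ) :
    IntegrableOn (fun w : ℝ => (a + b*w + c*w^2) * Real.exp (-w)) (Ioi 0) := by
  simp only [quadratic_mul_exp_neg_eq]
  exact (((integrableOn_pow_mul_exp_neg 0).const_mul a).add
    ((integrableOn_pow_mul_exp_neg 1).const_mul b)).add
      ((integrableOn_pow_mul_exp_neg 2).const_mul c)

lemma integral_quadratic_mul_exp_neg (a b c : ℝ) :
    ∫ w in Ioi (0:ℝ), (a + b*w + c*w^2) * Real.exp (-w) = a + b + 2*c := by
  have h₀ : IntegrableOn (fun w : ℝ => a * (w^0 * Real.exp (-w))) (Ioi 0) :=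
    (integrableOn_pow_mul_exp_neg 0).const_mul a
  have h₁ : IntegrableOn (fun w : ℝ => b * (w^1 * Real.exp (-w))) (Ioi 0) :=
    (integrableOn_pow_mul_exp_neg 1).const_mul b
  have h₂ : IntegrableOn (fun w : ℝ => c * (w^2 * Real.exp (-w))) (Ioi 0) :=
    (integrableOn_pow_mul_exp_neg 2).const_mul c
  have h₀₁ : IntegrableOn
      (fun w : ℝ => a * (w^0 * Real.exp (-w)) + b * (w^1 * Real.exp (-w))) (Ioi 0) :=
    h₀.add h₁
  simp only [quadratic_mul_exp_neg_eq]
  rw [integral_add h₀₁ h₂, integral_add h₀ h₁, integral_const_mul, integral_const_mul,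
    integral_const_mul, integral_pow_mul_exp_neg, integral_pow_mul_exp_neg,
    integral_pow_mul_exp_neg]
  norm_num [Nat.factorial]
  ring

lemma gdot_sq_div_g {w : ℝ} (hw : 0 < w) :
    gdot w^2 / g w = (2 + (-2)*w + (1/2)*w^2) * Real.exp (-w) := by
  rw [g_of_pos hw, gdot]
  field_simp
  ring

lemma integral_gdot_sq_div_g : ∫ w in Ioi (0:ℝ), gdot w^2 / g w = 1 := by
  rw [setIntegral_congr_fun measurableSet_Ioi (fun w hw => gdot_sq_div_g hw),
    integral_quadratic_mul_exp_neg]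
  norm_num

lemma lintegral_gdot_sq_div_g : ∫⁻ w in Ioi (0:ℝ), ENNReal.ofReal (gdot w^2 / g w) = 1 := by
  rw [← ofReal_integral_eq_lintegral_ofReal
    ((integrableOn_quadratic_mul_exp_neg _ _ _).congr_fun
      (fun w hw => (gdot_sq_div_g hw).symm) measurableSet_Ioi)
    (.of_forall fun w => div_nonneg (sq_nonneg _) (g_nonneg _)),
    integral_gdot_sq_div_g, ENNReal.ofReal_one]

lemma Δ_add_true {θ w : ℝ} (hw : 0 < w) : Δ θ (θ + w, true) = -(gdot w / g w) := by
  simp [Δ, hw, neg_div]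

lemma Δ_sub_false {θ w : ℝ} (hw : 0 < w) : Δ θ (θ - w, false) = gdot w / g w := by
  have : ¬ θ < θ - w := by linarith
  simp [Δ, hw, this]

lemma sq_div_mul_self {K : Type*} [Field K] {a b : K} (hb : b ≠ 0) :
    (a / b)^2 * b = a^2 / b := by
  field_simp

lemma lintegral_Δ_sq (θ : ℝ) : ∫⁻ x, ENNReal.ofReal (Δ θ x ^ 2) ∂(P θ) = 1 := by
  rw [lintegral_P θ (by fun_prop),
    lintegral_mul_ofReal_g (G := fun w => ENNReal.ofReal (gdot w^2 / g w)),
    lintegral_mul_ofReal_g (G := fun w => ENNReal.ofReal (gdot w^2 / g w)),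
    lintegral_gdot_sq_div_g, ENNReal.add_halves]
  · intro w hw
    rw [← ENNReal.ofReal_mul (sq_nonneg _), Δ_sub_false hw, sq_div_mul_self (g_pos hw).ne']
  · intro w hw
    rw [← ENNReal.ofReal_mul (sq_nonneg _), Δ_add_true hw, neg_sq,
      sq_div_mul_self (g_pos hw).ne']

lemma integrable_Δ_sq (θ : ℝ) : Integrable (fun x => Δ θ x ^ 2) (P θ) :=
  ⟨by fun_prop, (hasFiniteIntegral_iff_ofReal (.of_forall fun _ => sq_nonneg _)).2
    (by rw [lintegral_Δ_sq]; exact ENNReal.one_lt_top)⟩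

lemma integral_Δ_sq (θ : ℝ) : ∫ x, Δ θ x ^ 2 ∂(P θ) = 1 := by
  rw [integral_eq_lintegral_of_nonneg_ae (.of_forall fun _ => sq_nonneg _) (by fun_prop),
    lintegral_Δ_sq, ENNReal.toReal_one]

lemma abs_sub_sub_add_mul_deriv_le {f f' f'' : ℝ → ℝ} {x t K : ℝ}
    (hf : ∀ u, HasDerivAt f (f' u) u) (hf' : ∀ u, HasDerivAt f' (f'' u) u)
    (hK : ∀ u ∈ uIcc (x - t) x, |f'' u| ≤ K) :
    |f (x - t) - f x + t * f' x| ≤ K * t^2 := by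
  have hconv : Convex ℝ (uIcc (x - t) x) := convex_uIcc _ _
  have hK₀ : 0 ≤ K := (abs_nonneg _).trans (hK x right_mem_uIcc)
  have hdist : ∀ v ∈ uIcc (x - t) x, ‖v - x‖ ≤ |t| := fun v hv => by
    rw [Real.norm_eq_abs, abs_sub_comm]
    simpa using abs_sub_right_of_mem_uIcc hv
  have hf'_lip : ∀ v ∈ uIcc (x - t) x, ‖f' v - f' x‖ ≤ K * |t| := fun v hv =>
    (hconv.norm_image_sub_le_of_norm_hasDerivWithin_le (fun u _ => (hf' u).hasDerivWithinAt)
      hK right_mem_uIcc hv).trans (mul_le_mul_of_nonneg_left (hdist v hv) hK₀)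
  have hG : ∀ v ∈ uIcc (x - t) x,
      HasDerivWithinAt (fun v => f v - v * f' x) (f' v - f' x) (uIcc (x - t) x) v :=
    fun v _ => by
      have := (hf v).sub ((hasDerivAt_id v).mul_const (f' x))
      simp only [id, one_mul] at this
      exact this.hasDerivWithinAt
  have := hconv.norm_image_sub_le_of_norm_hasDerivWithin_le hG hf'_lip right_mem_uIcc
    left_mem_uIcc
  calc |f (x - t) - f x + t * f' x|
      = ‖(f (x - t) - (x - t) * f' x) - (f x - x * f' x)‖ := by rw [Real.norm_eq_abs]; ring_nf
    _ ≤ K * |t| * ‖x - t - x‖ := this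
    _ = K * t^2 := by rw [Real.norm_eq_abs, sub_sub_cancel_left, abs_neg, mul_assoc,
        abs_mul_abs_self, sq]

-- Smooth extension of `√g` from `(0, ∞)` to `ℝ`; `√g` itself has a corner at `0`.
noncomputable def rootG (u : ℝ) : ℝ := u * Real.exp (-(u/2)) / √2

noncomputable def rootG' (u : ℝ) : ℝ := (1 - u/2) * Real.exp (-(u/2)) / √2

noncomputable def rootG'' (u : ℝ) : ℝ := (u/4 - 1) * Real.exp (-(u/2)) / √2

lemma hasDerivAt_rootG (u : ℝ) : HasDerivAt rootG (rootG' u) u :=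
  (((hasDerivAt_id u).mul ((hasDerivAt_id u).div_const 2).neg.exp).div_const √2).congr_deriv
    (by simp only [rootG', id, Pi.neg_apply]; ring)

lemma hasDerivAt_rootG' (u : ℝ) : HasDerivAt rootG' (rootG'' u) u :=
  (((((hasDerivAt_id u).div_const 2).const_sub 1).mul
    ((hasDerivAt_id u).div_const 2).neg.exp).div_const √2).congr_deriv
    (by simp only [rootG'', id, Pi.neg_apply]; ring)

lemma exp_neg_half_sq (u : ℝ) : Real.exp (-(u/2)) ^ 2 = Real.exp (-u) := by
  rw [← Real.exp_nat_mul]; ring_nf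

lemma sqrt_g_of_pos {w : ℝ} (hw : 0 < w) : √(g w) = rootG w := by
  rw [Real.sqrt_eq_iff_mul_self_eq (g_nonneg w) (by unfold rootG; positivity), ← sq, rootG,
    div_pow, mul_pow, exp_neg_half_sq, Real.sq_sqrt zero_le_two, g_of_pos hw]
  ring

lemma gdot_div_two_sqrt_g {w : ℝ} (hw : 0 < w) : gdot w / (2 * √(g w)) = rootG' w := by
  rw [sqrt_g_of_pos hw, gdot, rootG, rootG', ← exp_neg_half_sq]
  have : Real.exp (-(w/2)) ≠ 0 := (Real.exp_pos _).ne'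
  field_simp
  rw [Real.sq_sqrt zero_le_two]
  ring

noncomputable def rootGBound (w : ℝ) : ℝ := (5/4 + w/4) * Real.exp ((1 - w)/2) / √2

lemma abs_rootG''_le {u w : ℝ} (hw : 0 ≤ w) (hu : |u - w| ≤ 1) :
    |rootG'' u| ≤ rootGBound w := by
  obtain ⟨hu₁, hu₂⟩ := abs_le.1 hu
  rw [rootG'', rootGBound, abs_div, abs_mul, abs_of_pos (Real.exp_pos _),
    abs_of_pos (by positivity : (0:ℝ) < √2)]
  gcongr
  · exact abs_le.2 ⟨by linarith, by linarith⟩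
  · linarith

lemma rootGBound_sq (w : ℝ) :
    rootGBound w ^ 2 =
      (25 * Real.exp 1 / 32 + 5 * Real.exp 1 / 16 * w + Real.exp 1 / 32 * w^2) * Real.exp (-w) := by
  have : Real.exp ((1 - w)/2) ^ 2 = Real.exp 1 * Real.exp (-w) := by
    rw [← Real.exp_nat_mul, ← Real.exp_add]; ring_nf
  rw [rootGBound, div_pow, mul_pow, this, Real.sq_sqrt zero_le_two]
  ring

lemma lintegral_mul_rootGBound_sq_le {c : ℝ} (hc : 0 ≤ c) :
    ∫⁻ w in Ioi (0:ℝ), ENNReal.ofReal (c * rootGBound w ^ 2) ≤ ENNReal.ofReal (c * 4) := by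
  have h_int : IntegrableOn (fun w => rootGBound w ^ 2) (Ioi 0) :=
    (integrableOn_quadratic_mul_exp_neg _ _ _).congr_fun (fun w _ => (rootGBound_sq w).symm)
      measurableSet_Ioi
  rw [← ofReal_integral_eq_lintegral_ofReal (h_int.const_mul c)
      (.of_forall fun _ => by positivity), integral_const_mul,
    setIntegral_congr_fun measurableSet_Ioi (fun w _ => rootGBound_sq w),
    integral_quadratic_mul_exp_neg]
  refine ENNReal.ofReal_le_ofReal (mul_le_mul_of_nonneg_left ?_ hc)
  linarith [Real.exp_one_lt_d9]

noncomputable def rootRemainder (t w : ℝ) : ℝ :=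
  √(g (w - t)) - √(g w) + t * (gdot w / (2 * √(g w)))

lemma abs_rootRemainder_le_of_lt {t w : ℝ} (ht : |t| ≤ 1) (hw : 0 < w) (htw : t < w) :
    |rootRemainder t w| ≤ rootGBound w * t^2 := by
  rw [rootRemainder, gdot_div_two_sqrt_g hw, sqrt_g_of_pos hw, sqrt_g_of_pos (sub_pos.2 htw)]
  refine abs_sub_sub_add_mul_deriv_le hasDerivAt_rootG hasDerivAt_rootG' fun u hu => ?_
  refine abs_rootG''_le hw.le ((abs_sub_comm u w).trans_le ?_)
  simpa using (abs_sub_right_of_mem_uIcc hu).trans (by simpa using ht)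

lemma abs_rootRemainder_le_of_le {t w : ℝ} (ht : t ≤ 1) (hw : 0 < w) (hwt : w ≤ t) :
    |rootRemainder t w| ≤ 2 * t := by
  have h_exp : Real.exp (-(w/2)) ≤ 1 := Real.exp_le_one_iff.2 (by linarith)
  have h_sqrt2 : 1 ≤ √2 := Real.one_le_sqrt.2 one_le_two
  have h_root : |rootG w| ≤ w := by
    rw [rootG, abs_div, abs_mul, abs_of_pos hw, abs_of_pos (Real.exp_pos _),
      abs_of_pos (by positivity : (0:ℝ) < √2)]
    calc w * Real.exp (-(w/2)) / √2 ≤ w * 1 / 1 := by gcongr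
      _ = w := by ring
  have h_root' : |rootG' w| ≤ 1 := by
    rw [rootG', abs_div, abs_mul, abs_of_pos (Real.exp_pos _),
      abs_of_pos (by positivity : (0:ℝ) < √2)]
    calc |1 - w/2| * Real.exp (-(w/2)) / √2 ≤ 1 * 1 / 1 := by
          gcongr; exact abs_le.2 ⟨by linarith, by linarith⟩
      _ = 1 := by ring
  rw [rootRemainder, gdot_div_two_sqrt_g hw, g_of_nonpos (by linarith : w - t ≤ 0),
    Real.sqrt_zero, zero_sub, sqrt_g_of_pos hw]
  calc |-rootG w + t * rootG' w| ≤ |rootG w| + |t| * |rootG' w| := by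
        rw [← abs_neg (rootG w), ← abs_mul]; exact abs_add_le _ _
    _ ≤ t + t * 1 := by
        rw [abs_of_pos (hw.trans_le hwt)]; gcongr; exacts [by linarith, by linarith]
    _ = 2 * t := by ring

lemma ofReal_rootRemainder_sq_le {t w : ℝ} (ht : |t| ≤ 1) (hw : 0 < w) :
    ENNReal.ofReal (rootRemainder t w ^ 2) ≤
      (Ioc 0 t).indicator (fun _ => ENNReal.ofReal (4 * t^2)) w
        + ENNReal.ofReal (t^4 * rootGBound w ^ 2) := by
  rcases lt_or_ge t w with htw | hwt
  · refine le_add_left (ENNReal.ofReal_le_ofReal ?_)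
    calc rootRemainder t w ^ 2 = |rootRemainder t w| ^ 2 := (sq_abs _).symm
      _ ≤ (rootGBound w * t^2) ^ 2 := by gcongr; exact abs_rootRemainder_le_of_lt ht hw htw
      _ = t^4 * rootGBound w ^ 2 := by ring
  · refine le_add_right ?_
    rw [indicator_of_mem (show w ∈ Ioc 0 t from ⟨hw, hwt⟩)]
    refine ENNReal.ofReal_le_ofReal ?_
    calc rootRemainder t w ^ 2 = |rootRemainder t w| ^ 2 := (sq_abs _).symm
      _ ≤ (2 * t) ^ 2 := by
          gcongr; exact abs_rootRemainder_le_of_le (abs_le.1 ht).2 hw hwt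
      _ = 4 * t^2 := by ring

lemma lintegral_rootRemainder_sq_le {t : ℝ} (ht : |t| ≤ 1) :
    ∫⁻ w in Ioi (0:ℝ), ENNReal.ofReal (rootRemainder t w ^ 2) ≤
      ENNReal.ofReal (8 * |t|^3) := by
  calc ∫⁻ w in Ioi (0:ℝ), ENNReal.ofReal (rootRemainder t w ^ 2)
      ≤ ∫⁻ w in Ioi (0:ℝ), ((Ioc 0 t).indicator (fun _ => ENNReal.ofReal (4 * t^2)) w
          + ENNReal.ofReal (t^4 * rootGBound w ^ 2)) :=
        setLIntegral_mono' measurableSet_Ioi fun w hw => ofReal_rootRemainder_sq_le ht hw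
    _ ≤ ENNReal.ofReal (4 * t^2) * ENNReal.ofReal |t| + ENNReal.ofReal (t^4 * 4) := by
        rw [lintegral_add_left (measurable_const.indicator measurableSet_Ioc)]
        gcongr
        · calc ∫⁻ w in Ioi 0, (Ioc 0 t).indicator (fun _ => ENNReal.ofReal (4 * t^2)) w
              ≤ ∫⁻ w, (Ioc 0 t).indicator (fun _ => ENNReal.ofReal (4 * t^2)) w :=
                setLIntegral_le_lintegral _ _
            _ ≤ ENNReal.ofReal (4 * t^2) * ENNReal.ofReal |t| := by
                rw [lintegral_indicator measurableSet_Ioc, setLIntegral_const, Real.volume_Ioc,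
                  sub_zero]
                gcongr
                exact le_abs_self t
        · exact lintegral_mul_rootGBound_sq_le (by positivity)
    _ ≤ ENNReal.ofReal (8 * |t|^3) := by
        rw [← ENNReal.ofReal_mul (by positivity), ← ENNReal.ofReal_add (by positivity)
          (by positivity)]
        refine ENNReal.ofReal_le_ofReal ?_
        rw [← sq_abs t, show t^4 = |t|^4 by rw [pow_abs, abs_of_nonneg (by positivity)]]
        nlinarith [pow_nonneg (abs_nonneg t) 3]

lemma sq_sqrt_div_sub_one_add_mul_mul {A G : ℝ} (hA : 0 ≤ A) (hG : 0 < G) (s d : ℝ) :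
    (√(A / G) - 1 + s * (d / (2 * G)))^2 * G = (√A - √G + s * (d / (2 * √G)))^2 := by
  obtain ⟨r, hr, rfl⟩ : ∃ r, 0 < r ∧ G = r^2 :=
    ⟨√G, Real.sqrt_pos.2 hG, (Real.sq_sqrt hG.le).symm⟩
  rw [Real.sqrt_div hA, Real.sqrt_sq hr.le]
  field_simp

lemma p_add_true {θ t w : ℝ} (hw : 0 < w) : p t θ (θ + w, true) = g (w - t) / g w := by
  simp [p, f, g_pos hw, add_sub_add_left_eq_sub]

lemma p_sub_false {θ t w : ℝ} (hw : 0 < w) : p t θ (θ - w, false) = g (w - -t) / g w := by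
  simp [p, f, g_pos hw]
  ring_nf

lemma lintegral_dqm_integrand (θ t : ℝ) :
    ∫⁻ x, ENNReal.ofReal ((√(p t θ x) - 1 - (t/2) * Δ θ x)^2) ∂(P θ) =
      (∫⁻ w in Ioi 0, ENNReal.ofReal (rootRemainder t w ^ 2)) / 2
        + (∫⁻ w in Ioi 0, ENNReal.ofReal (rootRemainder (-t) w ^ 2)) / 2 := by
  rw [lintegral_P θ (by fun_prop), lintegral_mul_ofReal_g, lintegral_mul_ofReal_g]
  · intro w hw
    rw [← ENNReal.ofReal_mul (sq_nonneg _), p_sub_false hw, Δ_sub_false hw, rootRemainder,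
      ← sq_sqrt_div_sub_one_add_mul_mul (g_nonneg _) (g_pos hw)]
    ring_nf
  · intro w hw
    rw [← ENNReal.ofReal_mul (sq_nonneg _), p_add_true hw, Δ_add_true hw, rootRemainder,
      ← sq_sqrt_div_sub_one_add_mul_mul (g_nonneg _) (g_pos hw)]
    ring_nf

lemma integral_dqm_integrand_le (θ : ℝ) {t : ℝ} (ht : |t| ≤ 1) :
    ∫ x, (√(p t θ x) - 1 - (t/2) * Δ θ x)^2 ∂(P θ) ≤ 8 * |t|^3 := by
  rw [integral_eq_lintegral_of_nonneg_ae (.of_forall fun _ => sq_nonneg _) (by fun_prop)]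
  refine ENNReal.toReal_le_of_le_ofReal (by positivity) ?_
  rw [lintegral_dqm_integrand, ← ENNReal.add_halves (ENNReal.ofReal (8 * |t|^3))]
  gcongr
  · exact lintegral_rootRemainder_sq_le ht
  · simpa using lintegral_rootRemainder_sq_le (t := -t) (by rwa [abs_neg])

lemma lintegral_indicator_g_eq_zero_mul_g_le (a : ℝ) :
    ∫⁻ w, {w | g (w + a) = 0}.indicator 1 w * ENNReal.ofReal (g w) ≤
      ENNReal.ofReal (|a|^3 / 2) := by
  calc ∫⁻ w, {w | g (w + a) = 0}.indicator 1 w * ENNReal.ofReal (g w)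
      ≤ ∫⁻ w, (Ioc 0 |a|).indicator (fun _ => ENNReal.ofReal (a^2 / 2)) w := by
        refine lintegral_mono fun w => ?_
        simp only [indicator_apply, mem_ofPred_eq, mem_Ioc, Pi.one_apply]
        split_ifs with h_zero h_mem h_mem
        · rw [one_mul]
          refine ENNReal.ofReal_le_ofReal ((g_le_half_sq w).trans ?_)
          rw [← sq_abs a]
          gcongr
          exacts [h_mem.1.le, h_mem.2]
        · have hw : w ≤ 0 := not_lt.1 fun hw =>
            h_mem ⟨hw, by linarith [neg_abs_le a, g_eq_zero_iff.1 h_zero]⟩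
          simp [g_of_nonpos hw]
        all_goals simp
    _ = ENNReal.ofReal (|a|^3 / 2) := by
        rw [lintegral_indicator measurableSet_Ioc, setLIntegral_const, Real.volume_Ioc, sub_zero,
          ← ENNReal.ofReal_mul (by positivity), ← sq_abs a]
        ring_nf

lemma P_add_setOf_f_eq_zero_le (θ t : ℝ) :
    P (θ + t) {x | f θ x = 0} ≤ ENNReal.ofReal (|t|^3 / 2) := by
  have hS : MeasurableSet {x | f θ x = 0} := measurable_f θ (measurableSet_singleton 0)
  rw [← lintegral_indicator_one hS, lintegral_P (θ + t) (measurable_one.indicator hS),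
    ← ENNReal.add_halves (ENNReal.ofReal (|t|^3 / 2))]
  gcongr
  · convert lintegral_indicator_g_eq_zero_mul_g_le t using 4 with w
    simp [indicator_apply, f, show θ + t + w - θ = w + t by ring]
  · convert lintegral_indicator_g_eq_zero_mul_g_le (-t) using 4 with w
    · simp [indicator_apply, f, show θ - (θ + t - w) = w + -t by ring]
    · rw [abs_neg]

lemma isLittleO_sq_of_abs_le_cube {h : ℝ → ℝ} {C : ℝ}
    (hh : ∀ t, |t| ≤ 1 → |h t| ≤ C * |t|^3) :
    h =o[𝓝 0] (· ^ 2) := by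
  refine IsBigO.trans_isLittleO (g := (· ^ 3)) (.of_bound C ?_)
    (isLittleO_pow_pow (by norm_num))
  filter_upwards [Metric.closedBall_mem_nhds (0:ℝ) one_pos] with t ht
  simpa [Real.norm_eq_abs, abs_pow] using hh t (by simpa using ht)

/-- (a) `Δ_θ` is square integrable with
`∫ Δ_θ² dP_θ = ∫_0^∞ ġ(w)²/g(w) dw = 1`; and (b) the family `{P_θ}` is differentiable in
quadratic mean at every `θ` with score `Δ_θ`:
`∫ (√(p_{t,θ}) − 1 − (t/2)Δ_θ)² dP_θ = o(t²)` as `t → 0`, and the `P_θ`-singular part of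
`P_{θ+t}` has mass `o(t²)`. -/
theorem stmt8 (θ : ℝ) :
    MemLp (Δ θ) 2 (P θ) ∧
    (∫ x, (Δ θ x)^2 ∂(P θ) = ∫ w in Ioi (0:ℝ), (gdot w)^2 / g w) ∧
    (∫ w in Ioi (0:ℝ), (gdot w)^2 / g w = 1) ∧
    ((fun t : ℝ =>
        ∫ x, (Real.sqrt (p t θ x) - 1 - (t/2) * Δ θ x)^2 ∂(P θ))
      =o[𝓝 0] fun t : ℝ => t^2) ∧
    ((fun t : ℝ => (P (θ + t) {x : ℝ × Bool | f θ x = 0}).toReal)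
      =o[𝓝 0] fun t : ℝ => t^2) := by
  refine ⟨(memLp_two_iff_integrable_sq (by fun_prop)).2 (integrable_Δ_sq θ),
    by rw [integral_Δ_sq, integral_gdot_sq_div_g], integral_gdot_sq_div_g,
    isLittleO_sq_of_abs_le_cube (C := 8) fun t ht => ?_,
    isLittleO_sq_of_abs_le_cube (C := 1/2) fun t _ => ?_⟩
  · rw [abs_of_nonneg (integral_nonneg fun _ => sq_nonneg _)]
    exact integral_dqm_integrand_le θ ht
  · rw [abs_of_nonneg ENNReal.toReal_nonneg]
    exact (ENNReal.toReal_le_of_le_ofReal (by positivity) (P_add_setOf_f_eq_zero_le θ t)).trans_eq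
      (by ring)
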